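/- arXiv:1809.05299 — 2 statements merged into one kernel-verified Lean document; each statement's English description precedes it below -/
import Mathlib

section
/- Let ρₖ → ρ with |ρ| < 1, let (aₖ) be a bounded real sequence and (aₖ') a sequence with aₖ' − aₖ → 0. Define bₖ₊₁ = ρ bₖ + aₖ and bₖ₊₁' = ρₖ bₖ' + aₖ' with b₋₁ = b₋₁' = 0. Then bₖ' − bₖ → 0 as k → ∞. -/
open Filter

lemma lemA (r : ℝ) (hr0 : 0 ≤ r) (hr : r < 1) (d e : ℕ → ℝ)
    (hd : ∀ k, |d (k + 1)| ≤ r * |d k| + |e k|)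
    (he : Tendsto e atTop (nhds 0)) : Tendsto d atTop (nhds 0) := by
  rw [Metric.tendsto_atTop]
  intro δ hδ
  have h1r : 0 < 1 - r := by linarith
  have hc : (0:ℝ) < δ * (1 - r) / 2 := by positivity
  obtain ⟨N₁, hN₁⟩ := (Metric.tendsto_atTop.1 he) (δ * (1 - r) / 2) hc
  set D := |d N₁| with hD
  have hD0 : 0 ≤ D := abs_nonneg _
  have key : ∀ m, |d (N₁ + m)| ≤ r ^ m * D + δ / 2 := by
    intro m
    induction m with
    | zero => simp [hD]; linarith
    | succ m ih =>
      have h1 : |d (N₁ + m + 1)| ≤ r * |d (N₁ + m)| + |e (N₁ + m)| := hd (N₁ + m)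
      have h2 : |e (N₁ + m)| ≤ δ * (1 - r) / 2 := by
        have := hN₁ (N₁ + m) (Nat.le_add_right _ _)
        rw [Real.dist_eq, sub_zero] at this
        linarith
      have : |d (N₁ + (m + 1))| = |d (N₁ + m + 1)| := by ring_nf
      rw [this, pow_succ]
      nlinarith [hd (N₁ + m)]
  have hrm : Tendsto (fun m : ℕ => r ^ m * D) atTop (nhds 0) := by
    have := tendsto_pow_atTop_nhds_zero_of_lt_one hr0 hr
    simpa using this.mul_const D
  obtain ⟨m₀, hm₀⟩ := (Metric.tendsto_atTop.1 hrm) (δ / 2) (by linarith)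
  refine ⟨N₁ + m₀, fun n hn => ?_⟩
  have hmn : m₀ ≤ n - N₁ := by omega
  have hnn : n = N₁ + (n - N₁) := by omega
  have h3 := key (n - N₁)
  have h4 := hm₀ (n - N₁) hmn
  rw [Real.dist_eq, sub_zero] at h4 ⊢
  have h5 : |r ^ (n - N₁) * D| = r ^ (n - N₁) * D := abs_of_nonneg (by positivity)
  rw [h5] at h4
  rw [hnn]
  linarith

/-- If `ρₖ → ρ` with `|ρ| < 1`, `(aₖ)` is bounded, `aₖ' − aₖ → 0`, and
`bₖ₊₁ = ρ bₖ + aₖ`, `bₖ₊₁' = ρₖ bₖ' + aₖ'` with `b₋₁ = b₋₁' = 0` (indices shifted so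
that `b 0 = 0`), then `bₖ' − bₖ → 0`. -/
theorem stmt_5 (ρ : ℝ) (hρ : |ρ| < 1) (rho : ℕ → ℝ)
    (hrho : Tendsto rho atTop (nhds ρ))
    (a a' : ℕ → ℝ) (M : ℝ) (ha : ∀ k, |a k| ≤ M)
    (ha' : Tendsto (fun k => a' k - a k) atTop (nhds 0))
    (b b' : ℕ → ℝ) (hb0 : b 0 = 0) (hb'0 : b' 0 = 0)
    (hb : ∀ k, b (k + 1) = ρ * b k + a k)
    (hb' : ∀ k, b' (k + 1) = rho k * b' k + a' k) :
    Tendsto (fun k => b' k - b k) atTop (nhds 0) := by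
  have hM : 0 ≤ M := le_trans (abs_nonneg _) (ha 0)
  set r' : ℝ := (1 + |ρ|) / 2 with hr'
  have hρ0 : 0 ≤ |ρ| := abs_nonneg _
  have hr'1 : r' < 1 := by rw [hr']; linarith
  have hr'0 : 0 < 1 - r' := by linarith
  -- eventually |rho k| ≤ r'
  obtain ⟨N₁, hN₁⟩ := (Metric.tendsto_atTop.1 hrho) ((1 - |ρ|) / 2) (by linarith)
  obtain ⟨N₂, hN₂⟩ := (Metric.tendsto_atTop.1 ha') 1 one_pos
  set N := max N₁ N₂ with hN
  have hrhoB : ∀ k ≥ N₁, |rho k| ≤ r' := by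
    intro k hk
    have := hN₁ k hk
    rw [Real.dist_eq] at this
    have h2 : |rho k| - |ρ| ≤ |rho k - ρ| := abs_sub_abs_le_abs_sub _ _
    rw [hr']; linarith
  have haB : ∀ k ≥ N₂, |a' k| ≤ M + 1 := by
    intro k hk
    have := hN₂ k hk
    rw [Real.dist_eq, sub_zero] at this
    have h2 : |a' k| - |a k| ≤ |a' k - a k| := abs_sub_abs_le_abs_sub _ _
    have := ha k
    linarith
  set C : ℝ := max (|b' N|) ((M + 1) / (1 - r')) with hC
  have hC0 : 0 ≤ C := le_trans (abs_nonneg _) (le_max_left _ _)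
  have key : ∀ m, |b' (N + m)| ≤ C := by
    intro m
    induction m with
    | zero =>
      have : N + 0 = N := rfl
      rw [this]; exact le_max_left _ _
    | succ m ih =>
      have heq : b' (N + (m + 1)) = rho (N + m) * b' (N + m) + a' (N + m) := by
        have : N + (m + 1) = (N + m) + 1 := by ring
        rw [this, hb']
      rw [heq]
      have h1 : |rho (N + m)| ≤ r' := hrhoB _ (le_trans (le_max_left _ _) (Nat.le_add_right _ _))
      have h2 : |a' (N + m)| ≤ M + 1 := haB _ (le_trans (le_max_right _ _) (Nat.le_add_right _ _))
      have h3 : (M + 1) / (1 - r') ≤ C := le_max_right _ _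
      have h4 : M + 1 ≤ (1 - r') * C := by
        rw [div_le_iff₀ hr'0] at h3; linarith
      calc |rho (N + m) * b' (N + m) + a' (N + m)|
          ≤ |rho (N + m)| * |b' (N + m)| + |a' (N + m)| := by
            rw [← abs_mul]; exact abs_add_le _ _
        _ ≤ r' * C + (M + 1) := by
            have := abs_nonneg (b' (N + m))
            nlinarith
        _ ≤ C := by nlinarith
  have hbB : ∀ k ≥ N, |b' k| ≤ C := by
    intro k hk
    have : k = N + (k - N) := by omega
    rw [this]; exact key _
  -- forcing term
  set e : ℕ → ℝ := fun k => (rho k - ρ) * b' k + (a' k - a k) with he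
  have hrho0 : Tendsto (fun k => rho k - ρ) atTop (nhds 0) := by
    have := hrho.sub (tendsto_const_nhds (x := ρ))
    simpa using this
  have h1 : Tendsto (fun k => (rho k - ρ) * b' k) atTop (nhds 0) := by
    have hg : Tendsto (fun k => C * |rho k - ρ|) atTop (nhds 0) := by
      have := hrho0.abs
      simpa using this.const_mul C
    refine squeeze_zero_norm' ?_ hg
    · filter_upwards [eventually_ge_atTop N] with k hk
      have hb := hbB k hk
      simp only [Real.norm_eq_abs, abs_mul]
      have := abs_nonneg (rho k - ρ)
      nlinarith
  have hε : Tendsto e atTop (nhds 0) := by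
    have := h1.add ha'
    simpa using this
  have hd : ∀ k, |b' (k + 1) - b (k + 1)| ≤ |ρ| * |b' k - b k| + |e k| := by
    intro k
    have heq : b' (k + 1) - b (k + 1) = ρ * (b' k - b k) + e k := by
      rw [hb', hb, he]; ring
    rw [heq]
    calc |ρ * (b' k - b k) + e k| ≤ |ρ * (b' k - b k)| + |e k| := abs_add_le _ _
      _ = |ρ| * |b' k - b k| + |e k| := by rw [abs_mul]
  exact lemA |ρ| hρ0 hρ (fun k => b' k - b k) e hd hε
end

section
/- Let 𝒰 and 𝒲 be symmetric positive semidefinite m×m matrices with 𝒲 positive definite. Then (1/2)·tr(𝒰𝒲⁻¹) ≤ tr(𝒰𝒲⁻¹) − (1/2)·log det(I + 𝒰𝒲⁻¹) ≤ tr(𝒰𝒲⁻¹) − (1/2)·log(1 + tr(𝒰𝒲⁻¹)). -/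
/-!
Write `𝒰𝒲⁻¹ = U V` with `V = 𝒲⁻¹ ≥ 0` and `S = √V`. Since `U S S` and `S U S` have the same
trace and `det (1 + X Y) = det (1 + Y X)`, both sides only see the positive semidefinite matrix
`M = S U S`. With eigenvalues `μᵢ ≥ 0` of `M`, the claim becomes
`1 + ∑ μᵢ ≤ ∏ (1 + μᵢ) ≤ exp (∑ μᵢ)`.
-/

open Matrix
open scoped MatrixOrder

theorem Finset.one_add_sum_le_prod_one_add {ι R : Type*} [CommSemiring R] [PartialOrder R]
    [IsOrderedRing R] (s : Finset ι) {f : ι → R} (hf : ∀ i ∈ s, 0 ≤ f i) :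
    1 + ∑ i ∈ s, f i ≤ ∏ i ∈ s, (1 + f i) := by
  classical
  induction s using Finset.induction_on with
  | empty => simp
  | insert a s ha ih =>
    rw [Finset.sum_insert ha, Finset.prod_insert ha]
    have hfa : 0 ≤ f a := hf a (Finset.mem_insert_self a s)
    have hs : ∀ i ∈ s, 0 ≤ f i := fun i hi ↦ hf i (Finset.mem_insert_of_mem hi)
    calc 1 + (f a + ∑ i ∈ s, f i) ≤ 1 + (f a + ∑ i ∈ s, f i) + f a * ∑ i ∈ s, f i :=
          le_add_of_nonneg_right (mul_nonneg hfa (Finset.sum_nonneg hs))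
      _ = (1 + f a) * (1 + ∑ i ∈ s, f i) := by ring
      _ ≤ (1 + f a) * ∏ i ∈ s, (1 + f i) :=
          mul_le_mul_of_nonneg_left (ih hs) (add_nonneg zero_le_one hfa)

namespace Matrix

variable {n 𝕜 : Type*} [Fintype n] [DecidableEq n] [RCLike 𝕜]

theorem IsHermitian.det_cfc {A : Matrix n n 𝕜} (hA : A.IsHermitian) (f : ℝ → ℝ) :
    (cfc f A).det = ∏ i, (f (hA.eigenvalues i) : 𝕜) := by
  rw [hA.cfc_eq, IsHermitian.cfc]
  simp only [det_map, det_diagonal, Function.comp_apply]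

theorem IsHermitian.det_one_add {A : Matrix n n 𝕜} (hA : A.IsHermitian) :
    (1 + A).det = ∏ i, (1 + hA.eigenvalues i : 𝕜) := by
  have hcfc : cfc (fun x : ℝ ↦ 1 + x) A = 1 + A := by
    rw [cfc_const_add _ _ _, cfc_id' ℝ A, map_one]
  rw [← hcfc, hA.det_cfc]
  simp only [map_add, map_one]

variable {M U V : Matrix n n ℝ}

theorem PosSemidef.log_det_one_add_le_trace (hM : M.PosSemidef) :
    Real.log (1 + M).det ≤ M.trace := by
  have hdet_pos : 0 < (1 + M).det := by
    rw [hM.isHermitian.det_one_add]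
    exact Finset.prod_pos fun i _ ↦ add_pos_of_pos_of_nonneg one_pos (hM.eigenvalues_nonneg i)
  rw [Real.log_le_iff_le_exp hdet_pos, hM.isHermitian.det_one_add,
    hM.isHermitian.trace_eq_sum_eigenvalues]
  exact Real.prod_one_add_le_exp_sum _ hM.eigenvalues_nonneg

theorem PosSemidef.log_one_add_trace_le_log_det_one_add (hM : M.PosSemidef) :
    Real.log (1 + M.trace) ≤ Real.log (1 + M).det := by
  have hμ : ∀ i ∈ Finset.univ, 0 ≤ hM.isHermitian.eigenvalues i :=
    fun i _ ↦ hM.eigenvalues_nonneg i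
  rw [hM.isHermitian.det_one_add, hM.isHermitian.trace_eq_sum_eigenvalues]
  exact Real.log_le_log (add_pos_of_pos_of_nonneg one_pos (Finset.sum_nonneg hμ))
    (Finset.one_add_sum_le_prod_one_add _ hμ)

theorem PosSemidef.exists_posSemidef_trace_mul_eq_and_det_one_add_mul_eq
    (hU : U.PosSemidef) (hV : V.PosSemidef) :
    ∃ M : Matrix n n ℝ, M.PosSemidef ∧ (U * V).trace = M.trace ∧
      (1 + U * V).det = (1 + M).det := by
  set S := CFC.sqrt V
  have hSS : S * S = V := CFC.sqrt_mul_sqrt_self V hV.nonneg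
  have hS : Sᴴ = S := (CFC.sqrt_nonneg V).posSemidef.isHermitian
  refine ⟨S * U * S, by simpa only [hS] using hU.conjTranspose_mul_mul_same S, ?_, ?_⟩
  · rw [← hSS, ← Matrix.mul_assoc, trace_mul_comm, Matrix.mul_assoc]
  · rw [← hSS, ← Matrix.mul_assoc, det_one_add_mul_comm, Matrix.mul_assoc]

end Matrix

/-- Bounds on the expected KL divergence: for `𝒰 ≥ 0` symmetric PSD and `𝒲 > 0`,
`(1/2)tr(𝒰𝒲⁻¹) ≤ tr(𝒰𝒲⁻¹) − (1/2)logdet(I + 𝒰𝒲⁻¹) ≤ tr(𝒰𝒲⁻¹) − (1/2)log(1 + tr(𝒰𝒲⁻¹))`. -/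
theorem stmt_9 {m : ℕ} (scrU scrW : Matrix (Fin m) (Fin m) ℝ)
    (hU : scrU.PosSemidef) (hW : scrW.PosDef) :
    (1 / 2) * (scrU * scrW⁻¹).trace ≤
        (scrU * scrW⁻¹).trace - (1 / 2) * Real.log (1 + scrU * scrW⁻¹).det ∧
      (scrU * scrW⁻¹).trace - (1 / 2) * Real.log (1 + scrU * scrW⁻¹).det ≤
        (scrU * scrW⁻¹).trace - (1 / 2) * Real.log (1 + (scrU * scrW⁻¹).trace) := by
  obtain ⟨M, hM, htrace, hdet⟩ :=
    hU.exists_posSemidef_trace_mul_eq_and_det_one_add_mul_eq hW.inv.posSemidef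
  rw [htrace, hdet]
  constructor
  · linarith [hM.log_det_one_add_le_trace]
  · linarith [hM.log_one_add_trace_le_log_det_one_add]
end
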